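/- arXiv:1105.3081 — 3 statements merged into one kernel-verified Lean document; each statement's English description precedes it below -/
import Mathlib

section
/- Let V be a real inner product space of dimension n ≥ 4. If a·π + b·Φ = a'·π + b'·Φ' for reals a, b, a', b' with b ≠ 0 and unit vectors ξ, ξ' in V with corresponding tensors Φ, Φ', then a = a', b = b' and ξ' = ±ξ; that is, the decomposition R = a·π + b·Φ with b ≠ 0 determines a, b uniquely and ξ up to sign. -/
open scoped RealInnerProductSpace

noncomputable def piT {V : Type*} [NormedAddCommGroup V] [InnerProductSpace ℝ V]
    (X Y Z U : V) : ℝ :=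
  ⟪Y, Z⟫ * ⟪X, U⟫ - ⟪X, Z⟫ * ⟪Y, U⟫

noncomputable def PhiT {V : Type*} [NormedAddCommGroup V] [InnerProductSpace ℝ V]
    (ξ X Y Z U : V) : ℝ :=
  ⟪Y, Z⟫ * (⟪ξ, X⟫ * ⟪ξ, U⟫) - ⟪X, Z⟫ * (⟪ξ, Y⟫ * ⟪ξ, U⟫)
    + ⟪X, U⟫ * (⟪ξ, Y⟫ * ⟪ξ, Z⟫) - ⟪Y, U⟫ * (⟪ξ, X⟫ * ⟪ξ, Z⟫)

/-- The decomposition R = a·π + b·Φ_ξ with b ≠ 0 determines a and b uniquely,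
and ξ up to sign. -/
theorem QC_decomposition_unique
    {V : Type*} [NormedAddCommGroup V] [InnerProductSpace ℝ V]
    [FiniteDimensional ℝ V] (hdim : 4 ≤ Module.finrank ℝ V)
    (ξ ξ' : V) (hξ : ‖ξ‖ = 1) (hξ' : ‖ξ'‖ = 1)
    (a b a' b' : ℝ) (hb : b ≠ 0)
    (heq : ∀ X Y Z U : V,
      a * piT X Y Z U + b * PhiT ξ X Y Z U
        = a' * piT X Y Z U + b' * PhiT ξ' X Y Z U) :
    a = a' ∧ b = b' ∧ (ξ' = ξ ∨ ξ' = -ξ) := by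
  classical
  set S : Submodule ℝ V := Submodule.span ℝ ({ξ, ξ'} : Set V) with hS
  have hScard : Module.finrank ℝ S ≤ 2 := by
    refine (finrank_span_le_card ({ξ, ξ'} : Set V)).trans ?_
    refine (Finset.card_le_card ?_).trans (Finset.card_insert_le ξ {ξ'})
    intro x hx
    simp only [Set.toFinset_insert, Set.toFinset_singleton] at hx
    exact hx
  have hKrank : 2 ≤ Module.finrank ℝ (Sᗮ : Submodule ℝ V) := by
    have := Submodule.finrank_add_finrank_orthogonal S
    omega
  set B := stdOrthonormalBasis ℝ (Sᗮ : Submodule ℝ V)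
  set u : V := (B ⟨0, by omega⟩ : V) with hu
  set v : V := (B ⟨1, by omega⟩ : V) with hv
  have hBmem : ∀ i, ((B i : Sᗮ) : V) ∈ Sᗮ := fun i => (B i).2
  have hξS : ξ ∈ S := Submodule.subset_span (by simp)
  have hξ'S : ξ' ∈ S := Submodule.subset_span (by simp)
  have hξu : ⟪ξ, u⟫ = 0 := (hBmem ⟨0, by omega⟩) ξ hξS
  have hξ'u : ⟪ξ', u⟫ = 0 := (hBmem ⟨0, by omega⟩) ξ' hξ'S
  have hξv : ⟪ξ, v⟫ = 0 := (hBmem ⟨1, by omega⟩) ξ hξS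
  have hξ'v : ⟪ξ', v⟫ = 0 := (hBmem ⟨1, by omega⟩) ξ' hξ'S
  have huξ : ⟪u, ξ⟫ = 0 := by rw [real_inner_comm]; exact hξu
  have huξ' : ⟪u, ξ'⟫ = 0 := by rw [real_inner_comm]; exact hξ'u
  have hvξ : ⟪v, ξ⟫ = 0 := by rw [real_inner_comm]; exact hξv
  have hvξ' : ⟪v, ξ'⟫ = 0 := by rw [real_inner_comm]; exact hξ'v
  have huu : ⟪u, u⟫ = 1 := by
    have := B.orthonormal.1 ⟨0, by omega⟩
    have h2 : ⟪u, u⟫ = ‖u‖ * ‖u‖ := real_inner_self_eq_norm_mul_norm u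
    rw [h2]
    simp only [hu, Submodule.norm_coe] at *
    rw [this]; ring
  have hvv : ⟪v, v⟫ = 1 := by
    have := B.orthonormal.1 ⟨1, by omega⟩
    have h2 : ⟪v, v⟫ = ‖v‖ * ‖v‖ := real_inner_self_eq_norm_mul_norm v
    rw [h2]
    simp only [hv, Submodule.norm_coe] at *
    rw [this]; ring
  have huv : ⟪u, v⟫ = 0 := by
    have hne : (⟨0, by omega⟩ : Fin (Module.finrank ℝ (Sᗮ : Submodule ℝ V))) ≠ ⟨1, by omega⟩ := by
      simp [Fin.ext_iff]
    have := B.orthonormal.2 hne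
    exact this
  have hvu : ⟪v, u⟫ = 0 := by rw [real_inner_comm]; exact huv
  have hξξ : ⟪ξ, ξ⟫ = 1 := by
    rw [real_inner_self_eq_norm_mul_norm, hξ]; ring
  have hξ'ξ' : ⟪ξ', ξ'⟫ = 1 := by
    rw [real_inner_self_eq_norm_mul_norm, hξ']; ring
  set c : ℝ := ⟪ξ', ξ⟫ with hc
  have hcc : ⟪ξ, ξ'⟫ = c := (real_inner_comm ξ ξ').symm
  -- evaluate at (u, v, u, v): gives a = a'
  have E0 := heq u v u v
  simp only [piT, PhiT, huv, hvu, huu, hvv, hξu, hξv, hξ'u, hξ'v] at E0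
  have ha : a = a' := by ring_nf at E0; linarith
  -- evaluate at (ξ, u, ξ, u)
  have E1 := heq ξ u ξ u
  simp only [piT, PhiT, huξ, hξu, hξ'u, huu, hξξ, ← hc, hcc] at E1
  have h1 : b = b' * (c * c) := by ring_nf at E1 ⊢; linarith [E1]
  -- evaluate at (ξ', u, ξ', u)
  have E2 := heq ξ' u ξ' u
  simp only [piT, PhiT, huξ', hξ'u, hξu, huu, hξ'ξ', ← hc, hcc] at E2
  have h2 : b * (c * c) = b' := by ring_nf at E2 ⊢; linarith [E2]
  have hc2 : c * c = 1 := by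
    have h3 : b * (c * c * (c * c) - 1) = 0 := by linear_combination (c*c)*h2 - h1
    rcases mul_eq_zero.mp h3 with h | h
    · exact absurd h hb
    · have h4 : (c * c - 1) * (c * c + 1) = 0 := by linear_combination h
      rcases mul_eq_zero.mp h4 with h5 | h5
      · linarith
      · linarith [mul_self_nonneg c]
  have hbb : b = b' := by linear_combination h2 - b * hc2
  refine ⟨ha, hbb, ?_⟩
  have hcpm : c = 1 ∨ c = -1 := by
    rcases mul_eq_zero.mp (show (c - 1) * (c + 1) = 0 by linear_combination hc2) with h | h
    · left; linarith
    · right; linarith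
  rcases hcpm with h | h
  · left
    have : ⟪ξ' - ξ, ξ' - ξ⟫ = 0 := by
      rw [inner_sub_left, inner_sub_right, inner_sub_right]
      rw [hξ'ξ', hξξ, ← hc, hcc, h]; ring
    exact sub_eq_zero.mp (inner_self_eq_zero.mp this)
  · right
    have : ⟪ξ' + ξ, ξ' + ξ⟫ = 0 := by
      rw [inner_add_left, inner_add_right, inner_add_right]
      rw [hξ'ξ', hξξ, ← hc, hcc, h]; ring
    exact eq_neg_of_add_eq_zero_left (inner_self_eq_zero.mp this)
end

section
/- Let V be a real inner product space of dimension n ≥ 4, ξ a unit vector, a, b ∈ ℝ with a < 0, and set α = √(−a), β = −b/√(−a), h = α·g + β·η⊗η. Then for all X, Y, Z, U: a·π(X,Y,Z,U) + b·Φ(X,Y,Z,U) = −( h(Y,Z)h(X,U) − h(X,Z)h(Y,U) ). That is, a curvature tensor of quasi-constant type with a < 0 is realized (with the opposite sign, as for a space-like hypersurface with time-like normal in Minkowski space) by the second fundamental form h. -/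
open scoped RealInnerProductSpace

noncomputable def hForm {V : Type*} [NormedAddCommGroup V] [InnerProductSpace ℝ V]
    (ξ : V) (α β : ℝ) (X Y : V) : ℝ :=
  α * ⟪X, Y⟫ + β * (⟪ξ, X⟫ * ⟪ξ, Y⟫)

/-- A quasi-constant curvature tensor with a < 0 is realized with the opposite sign by
the second fundamental form h = √(−a)·g − (b/√(−a))·η⊗η, as for a space-like
hypersurface with time-like normal in Minkowski space. -/
theorem QC_negative_realized_by_second_fundamental_form
    {V : Type*} [NormedAddCommGroup V] [InnerProductSpace ℝ V]
    [FiniteDimensional ℝ V] (hdim : 4 ≤ Module.finrank ℝ V)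
    (ξ : V) (hξ : ‖ξ‖ = 1) (a b : ℝ) (ha : a < 0)
    (α β : ℝ) (hα : α = Real.sqrt (-a)) (hβ : β = -b / Real.sqrt (-a)) :
    ∀ X Y Z U : V,
      a * piT X Y Z U + b * PhiT ξ X Y Z U
        = -(hForm ξ α β Y Z * hForm ξ α β X U - hForm ξ α β X Z * hForm ξ α β Y U) := by
  intro X Y Z U
  have hpos : (0:ℝ) < -a := by linarith
  have hs : Real.sqrt (-a) ≠ 0 := ne_of_gt (Real.sqrt_pos.2 hpos)
  have h2 : Real.sqrt (-a) * Real.sqrt (-a) = -a := Real.mul_self_sqrt (le_of_lt hpos)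
  have h3 : Real.sqrt (-a) * (-b / Real.sqrt (-a)) = -b := by field_simp
  subst hα hβ
  simp only [piT, PhiT, hForm]
  linear_combination (⟪Y, Z⟫ * ⟪X, U⟫ - ⟪X, Z⟫ * ⟪Y, U⟫) * h2 +
    (⟪Y, Z⟫ * (⟪ξ, X⟫ * ⟪ξ, U⟫) - ⟪X, Z⟫ * (⟪ξ, Y⟫ * ⟪ξ, U⟫)
      + ⟪X, U⟫ * (⟪ξ, Y⟫ * ⟪ξ, Z⟫) - ⟪Y, U⟫ * (⟪ξ, X⟫ * ⟪ξ, Z⟫)) * h3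
end

section
/- Let V be a real inner product space of dimension n ≥ 4, ξ a unit vector, and R = a·π + b·Φ with b ≠ 0. Then the Ricci operator of R has eigenvalue (n−1)a + b of multiplicity n−1 and eigenvalue (n−1)(a+b) of multiplicity 1, and these two eigenvalues are distinct (their difference is (n−2)b ≠ 0). Consequently, the unit eigenvector for the simple eigenvalue is ±ξ, so ξ is recovered (up to sign) from R alone. -/
open scoped RealInnerProductSpace

/-- For R = a·π + b·Φ with b ≠ 0, the Ricci operator has the eigenvalue (n−1)a+b on
ξ^⊥ and the simple eigenvalue (n−1)(a+b) on ξ; these eigenvalues are distinct, and any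
unit eigenvector for the simple eigenvalue is ±ξ, so R determines ξ up to sign. -/
theorem QC_Ricci_determines_xi
    {V : Type*} [NormedAddCommGroup V] [InnerProductSpace ℝ V]
    {n : ℕ} (hn : 4 ≤ n) (e : OrthonormalBasis (Fin n) ℝ V)
    (ξ : V) (hξ : ‖ξ‖ = 1) (a b : ℝ) (hb : b ≠ 0) :
    (∀ x : V, ⟪ξ, x⟫ = 0 → ∀ u : V,
        (∑ i, (a * piT x (e i) (e i) u + b * PhiT ξ x (e i) (e i) u))
          = ((n - 1 : ℝ) * a + b) * ⟪x, u⟫) ∧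
    (∀ u : V,
        (∑ i, (a * piT ξ (e i) (e i) u + b * PhiT ξ ξ (e i) (e i) u))
          = (n - 1 : ℝ) * (a + b) * ⟪ξ, u⟫) ∧
    (n - 1 : ℝ) * (a + b) - ((n - 1 : ℝ) * a + b) = (n - 2 : ℝ) * b ∧
    (n - 2 : ℝ) * b ≠ 0 ∧
    (∀ v : V, ‖v‖ = 1 →
      (∀ u : V,
        (∑ i, (a * piT v (e i) (e i) u + b * PhiT ξ v (e i) (e i) u))
          = (n - 1 : ℝ) * (a + b) * ⟪v, u⟫) →
      v = ξ ∨ v = -ξ) := by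
  have hξξ : ⟪ξ, ξ⟫ = (1 : ℝ) := by
    rw [real_inner_self_eq_norm_sq, hξ]; norm_num
  have hnorm : ∀ i, ⟪e i, e i⟫ = (1 : ℝ) := fun i => by
    rw [real_inner_self_eq_norm_sq, e.orthonormal.1 i]; norm_num
  have key : ∀ x u : V,
      (∑ i, (a * piT x (e i) (e i) u + b * PhiT ξ x (e i) (e i) u))
        = ((n - 1 : ℝ) * a + b) * ⟪x, u⟫ + (n - 2 : ℝ) * b * (⟪ξ, x⟫ * ⟪ξ, u⟫) := by
    intro x u
    have hS1 := e.sum_inner_mul_inner x u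
    have hS2 := e.sum_inner_mul_inner x ξ
    have hS3 := e.sum_inner_mul_inner ξ ξ
    have hS4 := e.sum_inner_mul_inner ξ u
    have hsum : (∑ i, (a * piT x (e i) (e i) u + b * PhiT ξ x (e i) (e i) u))
        = ∑ i, ((a * ⟪x, u⟫ + b * (⟪ξ, x⟫ * ⟪ξ, u⟫))
            - a * (⟪x, e i⟫ * ⟪e i, u⟫) - b * ⟪ξ, u⟫ * (⟪x, e i⟫ * ⟪e i, ξ⟫)
            + b * ⟪x, u⟫ * (⟪ξ, e i⟫ * ⟪e i, ξ⟫) - b * ⟪ξ, x⟫ * (⟪ξ, e i⟫ * ⟪e i, u⟫)) := by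
      refine Finset.sum_congr rfl fun i _ => ?_
      simp only [piT, PhiT, hnorm i, real_inner_comm (e i) ξ]
      ring
    rw [hsum]
    simp only [Finset.sum_sub_distrib, Finset.sum_add_distrib, Finset.sum_const,
      ← Finset.mul_sum, hS1, hS2, hS3, hS4, hξξ, Finset.card_univ, Fintype.card_fin,
      nsmul_eq_mul]
    rw [real_inner_comm x ξ]
    ring
  have hn4 : (4 : ℝ) ≤ (n : ℝ) := by exact_mod_cast hn
  refine ⟨?_, ?_, by ring, mul_ne_zero (by linarith) hb, ?_⟩
  · intro x hx u
    rw [key x u, hx]; ring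
  · intro u
    rw [key ξ u, hξξ]; ring
  · intro v hv hR
    have hco : ∀ u : V, ⟪⟪ξ, v⟫ • ξ - v, u⟫ = 0 := by
      intro u
      have h1 := key v u
      rw [hR u] at h1
      have h2 : (n - 2 : ℝ) * b * (⟪ξ, v⟫ * ⟪ξ, u⟫ - ⟪v, u⟫) = 0 := by linarith [h1]
      have h3 : ⟪ξ, v⟫ * ⟪ξ, u⟫ - ⟪v, u⟫ = 0 := by
        rcases mul_eq_zero.mp h2 with h | h
        · exact absurd h (mul_ne_zero (by linarith) hb)
        · exact h
      rw [inner_sub_left, real_inner_smul_left]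
      linarith
    have hveq : v = ⟪ξ, v⟫ • ξ := by
      have h0 : (⟪ξ, v⟫ • ξ - v : V) = 0 :=
        inner_self_eq_zero.mp (hco (⟪ξ, v⟫ • ξ - v))
      exact (sub_eq_zero.mp h0).symm
    have hnv : |⟪ξ, v⟫| = 1 := by
      have : ‖v‖ = |⟪ξ, v⟫| * ‖ξ‖ := by
        conv_lhs => rw [hveq]
        rw [norm_smul, Real.norm_eq_abs]
      rw [hv, hξ, mul_one] at this
      exact this.symm
    rcases abs_eq (by norm_num : (0:ℝ) ≤ 1) |>.mp hnv with h | h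
    · left; rw [hveq, h, one_smul]
    · right; rw [hveq, h, neg_smul, one_smul]
end
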